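/- arXiv:1211.1149 — 4 statements merged into one kernel-verified Lean document; each statement's English description precedes it below -/
import Mathlib

section
/- Let X_1,...,X_n be independent random variables taking values in [0,C] with C ≥ 1, let X be their sum, and let μ:[0,∞)→[0,1] be a function with μ(x)=0 for x ≥ C. If E[μ(X)] ≥ ε for some 0 < ε < 1/2, then E[X] ≤ 3C/ε. -/
/-!
Since `u ≤ 1` and `u` vanishes on `[C, ∞)`, the hypothesis gives `Pr[X < C] ≥ ε`. On the other
hand each summand lies in `[0, C]`, so `Var[X_i] ≤ C · E[X_i]` and, by independence,
`Var[X] ≤ C · E[X]`. If `E[X] > C`, Chebyshev's inequality applied to the event `X < C` gives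
`ε (E[X] - C)² ≤ Var[X] ≤ C · E[X]`, which forces `E[X] ≤ 3C/ε`.
-/

open MeasureTheory ProbabilityTheory

lemma mul_le_three_mul_of_mul_sq_sub_le {ε m C : ℝ} (hε : 0 < ε) (hε1 : ε ≤ 1) (hm : 0 ≤ m)
    (h : C < m → ε * (m - C) ^ 2 ≤ C * m) : ε * m ≤ 3 * C := by
  rcases le_or_gt m C with hmC | hCm
  · nlinarith
  have key := h hCm
  have hC : 0 < C := by nlinarith [mul_pos hε (pow_pos (sub_pos.2 hCm) 2)]
  by_contra! hlt
  have hmpos : 0 < m := by nlinarith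
  have hsq : (2 * m) ^ 2 ≤ (3 * (m - C)) ^ 2 := pow_le_pow_left₀ (by positivity) (by nlinarith) 2
  nlinarith [mul_lt_mul_of_pos_left hlt hmpos]

namespace ProbabilityTheory

variable {Ω : Type*} [MeasurableSpace Ω] {μ : Measure Ω}

lemma integral_comp_le_measureReal_lt [IsFiniteMeasure μ] {S : Ω → ℝ} (hS : Measurable S)
    {u : ℝ → ℝ} {C : ℝ} (hu01 : ∀ x, u x ∈ Set.Icc 0 1) (hu0 : ∀ x, C ≤ x → u x = 0) :
    μ[fun ω => u (S ω)] ≤ μ.real {ω | S ω < C} := by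
  have hset : MeasurableSet {ω | S ω < C} := measurableSet_lt hS measurable_const
  rw [← integral_indicator_one hset]
  refine integral_mono_of_nonneg (.of_forall fun ω => (hu01 _).1)
    ((integrable_const 1).indicator hset) (.of_forall fun ω => ?_)
  by_cases hω : S ω < C
  · simpa [hω] using (hu01 (S ω)).2
  · simp [hω, hu0 _ (not_lt.mp hω)]

lemma measureReal_lt_mul_sq_le_variance [IsFiniteMeasure μ] {S : Ω → ℝ} (hS : MemLp S 2 μ)
    {c : ℝ} (hc : c < μ[S]) : μ.real {ω | S ω < c} * (μ[S] - c) ^ 2 ≤ Var[S; μ] := by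
  have hsub : {ω | S ω < c} ⊆ {ω | μ[S] - c ≤ |S ω - μ[S]|} := fun ω (hω : S ω < c) => by
    rw [Set.mem_ofPred_eq, abs_sub_comm]
    exact (by linarith : μ[S] - c ≤ μ[S] - S ω).trans (le_abs_self _)
  have hcheb : μ.real {ω | μ[S] - c ≤ |S ω - μ[S]|} ≤ Var[S; μ] / (μ[S] - c) ^ 2 := by
    have := ENNReal.toReal_mono ENNReal.ofReal_ne_top
      (meas_ge_le_variance_div_sq hS (sub_pos.mpr hc))
    rwa [ENNReal.toReal_ofReal (div_nonneg (variance_nonneg _ _) (sq_nonneg _))] at this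
  rw [← le_div_iff₀ (pow_pos (sub_pos.mpr hc) 2)]
  exact (measureReal_mono hsub).trans hcheb

variable [IsProbabilityMeasure μ]

lemma variance_le_mul_integral_of_mem_Icc {X : Ω → ℝ} {C : ℝ} (hX : AEMeasurable X μ)
    (h : ∀ᵐ ω ∂μ, X ω ∈ Set.Icc 0 C) : Var[X; μ] ≤ C * μ[X] := by
  have hmean : 0 ≤ μ[X] := integral_nonneg_of_ae (h.mono fun _ hω => hω.1)
  nlinarith [variance_le_sub_mul_sub h hX]

lemma iIndepFun.variance_sum_le_mul_integral_sum {ι : Type*} [Fintype ι] {X : ι → Ω → ℝ}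
    {C : ℝ} (hX : ∀ i, AEMeasurable (X i) μ) (hindep : iIndepFun X μ)
    (h : ∀ i, ∀ᵐ ω ∂μ, X i ω ∈ Set.Icc 0 C) : Var[∑ i, X i; μ] ≤ C * μ[∑ i, X i] := by
  rw [IndepFun.variance_sum (fun i _ => memLp_of_bounded (h i) (hX i).aestronglyMeasurable 2)
    (fun i _ j _ hij => hindep.indepFun hij), Finset.sum_fn, integral_finsetSum _ fun i _ =>
    (memLp_of_bounded (h i) (hX i).aestronglyMeasurable 1).integrable le_rfl, Finset.mul_sum]
  exact Finset.sum_le_sum fun i _ => variance_le_mul_integral_of_mem_Icc (hX i) (h i)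

end ProbabilityTheory

theorem expectation_le_of_utility_ge_general
    {Ω : Type*} [MeasurableSpace Ω] (μ : Measure Ω) [IsProbabilityMeasure μ]
    {n : ℕ} (X : Fin n → Ω → ℝ) (C ε : ℝ) (hε : 0 < ε)
    (hmeas : ∀ i, Measurable (X i))
    (hindep : iIndepFun X μ)
    (hbound : ∀ i, ∀ᵐ ω ∂μ, X i ω ∈ Set.Icc 0 C)
    (u : ℝ → ℝ)
    (hu01 : ∀ x, u x ∈ Set.Icc (0:ℝ) 1)
    (hu0 : ∀ x, C ≤ x → u x = 0)
    (hEu : ε ≤ μ[fun ω => u (∑ i, X i ω)]) :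
    μ[fun ω => ∑ i, X i ω] ≤ 3 * C / ε := by
  simp only [← Finset.sum_apply] at hEu ⊢
  set S := ∑ i, X i
  have hS : Measurable S := by fun_prop
  have hS2 : MemLp S 2 μ :=
    memLp_finsetSum' _ fun i _ => memLp_of_bounded (hbound i) (hmeas i).aestronglyMeasurable 2
  have hmean : 0 ≤ μ[S] := integral_nonneg_of_ae <| by
    filter_upwards [ae_all_iff.2 hbound] with ω hω
    simpa only [S, Finset.sum_apply, Pi.zero_apply] using Finset.sum_nonneg fun i _ => (hω i).1
  have hprob : ε ≤ μ.real {ω | S ω < C} := hEu.trans (integral_comp_le_measureReal_lt hS hu01 hu0)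
  have hvar : Var[S; μ] ≤ C * μ[S] := hindep.variance_sum_le_mul_integral_sum
    (fun i => (hmeas i).aemeasurable) hbound
  rw [le_div_iff₀ hε, mul_comm]
  refine mul_le_three_mul_of_mul_sq_sub_le hε (hprob.trans measureReal_le_one) hmean fun hCm => ?_
  calc ε * (μ[S] - C) ^ 2 ≤ μ.real {ω | S ω < C} * (μ[S] - C) ^ 2 := by gcongr
    _ ≤ Var[S; μ] := measureReal_lt_mul_sq_le_variance hS2 hCm
    _ ≤ C * μ[S] := hvar

/-- If `E[u(X)] ≥ ε` for a `[0,1]`-valued utility `u` vanishing on `[C, ∞)` with `C ≥ 1`,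
and `X` is the sum of independent `[0,C]`-valued random variables, then `E[X] ≤ 3C/ε`. -/
theorem expectation_le_of_utility_ge
    {Ω : Type*} [MeasurableSpace Ω] (μ : Measure Ω) [IsProbabilityMeasure μ]
    {n : ℕ} (X : Fin n → Ω → ℝ) (C ε : ℝ) (hC : 1 ≤ C) (hε : 0 < ε) (hε2 : ε < 1/2)
    (hmeas : ∀ i, Measurable (X i))
    (hindep : iIndepFun X μ)
    (hbound : ∀ i, ∀ᵐ ω ∂μ, X i ω ∈ Set.Icc 0 C)
    (u : ℝ → ℝ) (hu_meas : Measurable u)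
    (hu01 : ∀ x, u x ∈ Set.Icc (0:ℝ) 1)
    (hu0 : ∀ x, C ≤ x → u x = 0)
    (hEu : ε ≤ μ[fun ω => u (∑ i, X i ω)]) :
    μ[fun ω => ∑ i, X i ω] ≤ 3 * C / ε :=
  expectation_le_of_utility_ge_general μ X C ε hε hmeas hindep hbound u hu01 hu0 hEu
end

section
/- Le Cam's Poisson approximation theorem: let X_1, X_2, ..., X_n be independent random variables taking values in {0,1,...,K}, let X = ΣX_i, π_i = Pr[X_i ≠ 0], and V_k = Σ_i Pr[X_i = k] for k = 1,...,K, with λ = Σ_i π_i. Let Y be the compound Poisson random variable Y = Σ_{j=1}^{N} Y_j, where N ~ Poisson(λ) and Y_1, Y_2, ... are i.i.d. with Pr[Y_j = k] = V_k/λ for k ∈ {1,...,K}, independent of N. Then Σ_{k≥0} |Pr[X=k] − Pr[Y=k]| ≤ 2 Σ_i π_i². -/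
/-!
Le Cam's bound is proved on probability generating functions, viewed as formal power series
normed by the ℓ¹ norm of their coefficients, which is submultiplicative. The law of `∑ Xᵢ` is
`∏ (1 - πᵢ + Aᵢ)`, where `Aᵢ` is the generating function of `Xᵢ` with its atom at zero removed,
and the law of `Y` is `e^{-λ} exp (∑ Aᵢ) = ∏ e^{-πᵢ} exp Aᵢ`. All factors have norm at most one,
so the distance between the two products is at most the sum of the distances between the factors,
and `e^{-π} exp A - (1 - π + A) = e^{-π} (exp A - 1 - A) + (e^{-π} - 1 + π) + (e^{-π} - 1) A`
has norm at most `2π (1 - e^{-π}) ≤ 2π²`.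
-/

open MeasureTheory ProbabilityTheory PowerSeries Finset
open scoped ENNReal

theorem ENNReal.tsum_mul_tsum_eq_tsum_sum_antidiagonal (f g : ℕ → ℝ≥0∞) :
    (∑' n, f n) * ∑' n, g n = ∑' n, ∑ kl ∈ antidiagonal n, f kl.1 * g kl.2 := by
  simp only [← Finset.tsum_subtype (antidiagonal _), ← ENNReal.tsum_mul_left,
    ← ENNReal.tsum_mul_right]
  rw [ENNReal.tsum_comm, ← ENNReal.tsum_prod, ← HasAntidiagonal.sigmaAntidiagonalEquivProd.tsum_eq,
    ENNReal.tsum_sigma']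
  rfl

namespace PowerSeries

/-- Valued in `ℝ≥0∞`, so that no summability conditions arise. -/
noncomputable def l1Norm (F : ℝ⟦X⟧) : ℝ≥0∞ := ∑' k, ‖coeff k F‖ₑ

lemma l1Norm_add_le (F G : ℝ⟦X⟧) : l1Norm (F + G) ≤ l1Norm F + l1Norm G := by
  rw [l1Norm, l1Norm, l1Norm, ← ENNReal.tsum_add]
  exact ENNReal.tsum_le_tsum fun k => by simpa using enorm_add_le _ _

lemma l1Norm_neg (F : ℝ⟦X⟧) : l1Norm (-F) = l1Norm F := by
  simp [l1Norm]

lemma l1Norm_mul_le (F G : ℝ⟦X⟧) : l1Norm (F * G) ≤ l1Norm F * l1Norm G := by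
  rw [l1Norm, l1Norm, l1Norm, ENNReal.tsum_mul_tsum_eq_tsum_sum_antidiagonal]
  refine ENNReal.tsum_le_tsum fun n => ?_
  rw [coeff_mul]
  exact (enorm_sum_le _ _).trans_eq (by simp [enorm_mul])

lemma l1Norm_C_mul (r : ℝ) (F : ℝ⟦X⟧) : l1Norm (C r * F) = ‖r‖ₑ * l1Norm F := by
  simp [l1Norm, enorm_mul, ENNReal.tsum_mul_left]

lemma l1Norm_C (r : ℝ) : l1Norm (C r) = ‖r‖ₑ := by
  rw [l1Norm, tsum_eq_single 0 fun k hk => by simp [coeff_C, hk]]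
  simp

lemma l1Norm_one : l1Norm 1 = 1 := by
  simpa using l1Norm_C 1

lemma l1Norm_prod_le {ι : Type*} (s : Finset ι) (F : ι → ℝ⟦X⟧) :
    l1Norm (∏ i ∈ s, F i) ≤ ∏ i ∈ s, l1Norm (F i) :=
  Finset.le_prod_of_submultiplicative l1Norm l1Norm_one.le l1Norm_mul_le s F

lemma l1Norm_pow_le (F : ℝ⟦X⟧) (m : ℕ) : l1Norm (F ^ m) ≤ l1Norm F ^ m := by
  simpa using l1Norm_prod_le (range m) fun _ => F

lemma l1Norm_prod_sub_prod_le {ι : Type*} (s : Finset ι) (F G : ι → ℝ⟦X⟧)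
    (hF : ∀ i ∈ s, l1Norm (F i) ≤ 1) (hG : ∀ i ∈ s, l1Norm (G i) ≤ 1) :
    l1Norm (∏ i ∈ s, F i - ∏ i ∈ s, G i) ≤ ∑ i ∈ s, l1Norm (F i - G i) := by
  classical
  induction s using Finset.cons_induction with
  | empty => simp [l1Norm]
  | cons a s ha ih =>
    simp only [Finset.forall_mem_cons] at hF hG
    have hGs : l1Norm (∏ i ∈ s, G i) ≤ 1 :=
      (l1Norm_prod_le s G).trans (Finset.prod_le_one' hG.2)
    rw [prod_cons, prod_cons, sum_cons,
      show F a * ∏ i ∈ s, F i - G a * ∏ i ∈ s, G i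
        = F a * (∏ i ∈ s, F i - ∏ i ∈ s, G i) + (F a - G a) * ∏ i ∈ s, G i by ring]
    calc _ ≤ l1Norm (F a) * l1Norm (∏ i ∈ s, F i - ∏ i ∈ s, G i)
          + l1Norm (F a - G a) * l1Norm (∏ i ∈ s, G i) :=
          (l1Norm_add_le _ _).trans (add_le_add (l1Norm_mul_le _ _) (l1Norm_mul_le _ _))
      _ ≤ 1 * ∑ i ∈ s, l1Norm (F i - G i) + l1Norm (F a - G a) * 1 := by
          gcongr
          exacts [hF.1, ih hF.2 hG.2]
      _ = _ := by rw [one_mul, mul_one, add_comm]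

lemma tsum_abs_coeff_le {F : ℝ⟦X⟧} {r : ℝ} (hr : 0 ≤ r) (h : l1Norm F ≤ ENNReal.ofReal r) :
    ∑' k, |coeff k F| ≤ r := by
  have h_eq : ∑' k, |coeff k F| = (l1Norm F).toReal := by
    rw [l1Norm, ENNReal.tsum_toReal_eq fun _ => enorm_ne_top]
    simp
  exact h_eq ▸ ENNReal.toReal_le_of_le_ofReal hr h

lemma coeff_pow_eq_zero_of_lt {A : ℝ⟦X⟧} (hA : constantCoeff A = 0) {k m : ℕ} (h : k < m) :
    coeff k (A ^ m) = 0 :=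
  coeff_of_lt_order _ ((Nat.cast_lt.2 h).trans_le (le_order_pow_of_constantCoeff_eq_zero m hA))

lemma coeff_subst_eq_tsum {A : ℝ⟦X⟧} (hA : constantCoeff A = 0) (f : ℝ⟦X⟧) (k : ℕ) :
    coeff k (f.subst A) = ∑' m, coeff m f * coeff k (A ^ m) := by
  rw [coeff_subst' (HasSubst.of_constantCoeff_zero' hA),
    ← tsum_eq_finsum (L := .unconditional ℕ)
      (coeff_subst_finite' (HasSubst.of_constantCoeff_zero' hA) f k)]
  rfl

lemma l1Norm_subst_le {A : ℝ⟦X⟧} (hA : constantCoeff A = 0) (f : ℝ⟦X⟧) :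
    l1Norm (f.subst A) ≤ ∑' m, ‖coeff m f‖ₑ * l1Norm A ^ m :=
  calc l1Norm (f.subst A) ≤ ∑' k, ∑' m, ‖coeff m f‖ₑ * ‖coeff k (A ^ m)‖ₑ :=
        ENNReal.tsum_le_tsum fun k => by
          rw [coeff_subst_eq_tsum hA]
          exact enorm_tsum_le_tsum_enorm.trans_eq (by simp [enorm_mul])
    _ = ∑' m, ‖coeff m f‖ₑ * l1Norm (A ^ m) := by
        rw [ENNReal.tsum_comm]
        simp only [ENNReal.tsum_mul_left, l1Norm]
    _ ≤ _ := by
        gcongr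
        exact l1Norm_pow_le A _

lemma constantCoeff_exp_subst {A : ℝ⟦X⟧} (hA : constantCoeff A = 0) :
    constantCoeff ((exp ℝ).subst A) = 1 := by
  rw [← coeff_zero_eq_constantCoeff_apply, coeff_subst_eq_tsum hA, tsum_eq_single 0 fun m hm => by
    rw [coeff_pow_eq_zero_of_lt hA (Nat.pos_of_ne_zero hm), mul_zero]]
  simp

lemma derivative_exp_subst {A : ℝ⟦X⟧} (hA : constantCoeff A = 0) :
    d⁄dX ℝ ((exp ℝ).subst A) = (exp ℝ).subst A * d⁄dX ℝ A := by
  rw [derivative_subst (HasSubst.of_constantCoeff_zero' hA), derivative_exp]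

lemma eq_of_derivative_eq_mul {a F G : ℝ⟦X⟧} (hF : d⁄dX ℝ F = F * a) (hG : d⁄dX ℝ G = G * a)
    (h0 : constantCoeff F = constantCoeff G) : F = G := by
  rw [← sub_eq_zero]
  have hD : d⁄dX ℝ (F - G) = (F - G) * a := by rw [map_sub, hF, hG, sub_mul]
  ext n
  induction n using Nat.strong_induction_on with
  | _ n ih =>
    rcases n with _ | n
    · simp [h0]
    · have h := congrArg (coeff n) hD
      rw [coeff_derivative, coeff_mul, sum_eq_zero fun ij hij => by
        rw [ih ij.1 (by have := mem_antidiagonal.1 hij; omega), map_zero, zero_mul]] at h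
      simpa [Nat.cast_add_one_ne_zero] using h

/-- Both sides solve `F' = F * (A + B)'` with `F(0) = 1`. -/
lemma exp_subst_add {A B : ℝ⟦X⟧} (hA : constantCoeff A = 0) (hB : constantCoeff B = 0) :
    (exp ℝ).subst (A + B) = (exp ℝ).subst A * (exp ℝ).subst B := by
  have hAB : constantCoeff (A + B) = 0 := by rw [map_add, hA, hB, add_zero]
  refine eq_of_derivative_eq_mul (derivative_exp_subst hAB) ?_ ?_
  · rw [Derivation.leibniz, derivative_exp_subst hA, derivative_exp_subst hB, map_add,
      smul_eq_mul, smul_eq_mul]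
    ring
  · rw [map_mul, constantCoeff_exp_subst hA, constantCoeff_exp_subst hB,
      constantCoeff_exp_subst hAB, mul_one]

lemma exp_subst_zero : (exp ℝ).subst (0 : ℝ⟦X⟧) = 1 := by
  rw [subst_zero_eq_C_constantCoeff]
  simp

lemma exp_subst_sum {ι : Type*} (s : Finset ι) (A : ι → ℝ⟦X⟧)
    (hA : ∀ i ∈ s, constantCoeff (A i) = 0) :
    (exp ℝ).subst (∑ i ∈ s, A i) = ∏ i ∈ s, (exp ℝ).subst (A i) := by
  classical
  induction s using Finset.cons_induction with
  | empty => simpa using exp_subst_zero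
  | cons a s ha ih =>
    simp only [forall_mem_cons] at hA
    rw [sum_cons, prod_cons, exp_subst_add hA.1 (by rw [map_sum]; exact sum_eq_zero hA.2),
      ih hA.2]

lemma tsum_enorm_coeff_mul_pow_eq {f : ℝ⟦X⟧} (hf : ∀ m, 0 ≤ coeff m f) {x y : ℝ} (hx : 0 ≤ x)
    (hy : HasSum (fun m => coeff m f * x ^ m) y) :
    ∑' m, ‖coeff m f‖ₑ * ENNReal.ofReal x ^ m = ENNReal.ofReal y := by
  rw [← hy.tsum_eq, ENNReal.ofReal_tsum_of_nonneg (fun m => by have := hf m; positivity)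
    hy.summable]
  refine tsum_congr fun m => ?_
  rw [Real.enorm_eq_ofReal (hf m), ENNReal.ofReal_mul (hf m), ENNReal.ofReal_pow hx]

lemma hasSum_coeff_exp_mul_pow (x : ℝ) :
    HasSum (fun m => coeff m (exp ℝ) * x ^ m) (Real.exp x) := by
  have h : (fun m => coeff m (exp ℝ) * x ^ m) = fun m => x ^ m / m.factorial := by
    funext m
    simp [div_eq_inv_mul]
  rw [h, Real.exp_eq_exp_ℝ]
  exact NormedSpace.expSeries_div_hasSum_exp x

lemma l1Norm_exp_subst_le {A : ℝ⟦X⟧} (hA : constantCoeff A = 0) {p : ℝ} (hp : 0 ≤ p)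
    (hAp : l1Norm A ≤ ENNReal.ofReal p) :
    l1Norm ((exp ℝ).subst A) ≤ ENNReal.ofReal (Real.exp p) :=
  calc l1Norm ((exp ℝ).subst A) ≤ ∑' m, ‖coeff m (exp ℝ)‖ₑ * ENNReal.ofReal p ^ m := by
        grw [l1Norm_subst_le hA, hAp]
    _ = _ := tsum_enorm_coeff_mul_pow_eq (fun m => by simp) hp (hasSum_coeff_exp_mul_pow p)

lemma l1Norm_exp_subst_sub_one_sub_le {A : ℝ⟦X⟧} (hA : constantCoeff A = 0) {p : ℝ}
    (hp : 0 ≤ p) (hAp : l1Norm A ≤ ENNReal.ofReal p) :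
    l1Norm ((exp ℝ).subst A - 1 - A) ≤ ENNReal.ofReal (Real.exp p - 1 - p) := by
  have hsubst : (exp ℝ).subst A - 1 - A = (exp ℝ - 1 - X).subst A := by
    have ha := HasSubst.of_constantCoeff_zero' hA
    rw [← coe_substAlgHom ha, map_sub, map_sub, map_one, substAlgHom_X]
  have hcoeff : ∀ m, coeff m (exp ℝ - 1 - X) * p ^ m
      = coeff m (exp ℝ) * p ^ m - (if m = 0 then 1 else 0) - (if m = 1 then p else 0) := by
    rintro (_ | _ | m) <;> simp [coeff_one, coeff_X]
  have hnonneg : ∀ m, 0 ≤ coeff m (exp ℝ - 1 - X) := by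
    rintro (_ | _ | m) <;> simp [coeff_one, coeff_X]
  have hsum : HasSum (fun m => coeff m (exp ℝ - 1 - X) * p ^ m) (Real.exp p - 1 - p) := by
    simp only [hcoeff]
    exact ((hasSum_coeff_exp_mul_pow p).sub (hasSum_ite_eq 0 1)).sub (hasSum_ite_eq 1 p)
  calc l1Norm ((exp ℝ).subst A - 1 - A)
        ≤ ∑' m, ‖coeff m (exp ℝ - 1 - X)‖ₑ * ENNReal.ofReal p ^ m := by
        grw [hsubst, l1Norm_subst_le hA, hAp]
    _ = _ := tsum_enorm_coeff_mul_pow_eq hnonneg hp hsum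

/-- For `A ≥ 0` of total mass `p`, the generating function of `∑_{j < N} Zⱼ` with
`N ~ Poisson(p)` and i.i.d. `Zⱼ` of law `A / p`. -/
noncomputable def compoundPoisson (p : ℝ) (A : ℝ⟦X⟧) : ℝ⟦X⟧ :=
  C (Real.exp (-p)) * (exp ℝ).subst A

lemma compoundPoisson_sum {ι : Type*} (s : Finset ι) (p : ι → ℝ) (A : ι → ℝ⟦X⟧)
    (hA : ∀ i ∈ s, constantCoeff (A i) = 0) :
    compoundPoisson (∑ i ∈ s, p i) (∑ i ∈ s, A i) = ∏ i ∈ s, compoundPoisson (p i) (A i) := by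
  simp only [compoundPoisson]
  rw [exp_subst_sum s A hA, prod_mul_distrib, ← map_prod, ← Real.exp_sum, sum_neg_distrib]

lemma l1Norm_compoundPoisson_le_one {A : ℝ⟦X⟧} (hA : constantCoeff A = 0) {p : ℝ}
    (hp : 0 ≤ p) (hAp : l1Norm A ≤ ENNReal.ofReal p) : l1Norm (compoundPoisson p A) ≤ 1 := by
  grw [compoundPoisson, l1Norm_C_mul, l1Norm_exp_subst_le hA hp hAp,
    Real.enorm_eq_ofReal (Real.exp_pos _).le, ← ENNReal.ofReal_mul (Real.exp_pos _).le,
    ← Real.exp_add, neg_add_cancel, Real.exp_zero, ENNReal.ofReal_one]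

theorem l1Norm_sub_compoundPoisson_le {A : ℝ⟦X⟧} (hA : constantCoeff A = 0) {p : ℝ}
    (hp : 0 ≤ p) (hAp : l1Norm A ≤ ENNReal.ofReal p) :
    l1Norm (C (1 - p) + A - compoundPoisson p A) ≤ ENNReal.ofReal (2 * p ^ 2) := by
  set e := Real.exp (-p)
  have he : e * Real.exp p = 1 := by rw [← Real.exp_add, neg_add_cancel, Real.exp_zero]
  have he_pos : 0 < e := Real.exp_pos _
  have he_ge : 1 - p ≤ e := by linarith [Real.add_one_le_exp (-p)]
  have he_le : e ≤ 1 := Real.exp_le_one_iff.2 (neg_nonpos.2 hp)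
  have htail_nonneg : 0 ≤ Real.exp p - 1 - p := by linarith [Real.add_one_le_exp p]
  have key : C (1 - p) + A - compoundPoisson p A
      = -(C e * ((exp ℝ).subst A - 1 - A) + C (e - 1 + p) + C (e - 1) * A) := by
    simp only [compoundPoisson, map_sub, map_add, map_one]
    ring
  calc _ = l1Norm (C e * ((exp ℝ).subst A - 1 - A) + C (e - 1 + p) + C (e - 1) * A) := by
        rw [key, l1Norm_neg]
    _ ≤ ‖e‖ₑ * l1Norm ((exp ℝ).subst A - 1 - A) + ‖e - 1 + p‖ₑ + ‖e - 1‖ₑ * l1Norm A := by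
        grw [l1Norm_add_le, l1Norm_add_le, l1Norm_C_mul, l1Norm_C_mul, l1Norm_C]
    _ ≤ ENNReal.ofReal e * ENNReal.ofReal (Real.exp p - 1 - p) + ENNReal.ofReal (e - 1 + p)
          + ENNReal.ofReal (1 - e) * ENNReal.ofReal p := by
        rw [Real.enorm_eq_ofReal he_pos.le, Real.enorm_eq_ofReal (by linarith),
          Real.enorm_eq_ofReal_abs, abs_of_nonpos (by linarith), neg_sub]
        grw [l1Norm_exp_subst_sub_one_sub_le hA hp hAp, hAp]
    _ = ENNReal.ofReal (2 * p * (1 - e)) := by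
        rw [← ENNReal.ofReal_mul he_pos.le, ← ENNReal.ofReal_mul (by linarith),
          ← ENNReal.ofReal_add (by positivity) (by linarith),
          ← ENNReal.ofReal_add (by nlinarith) (by nlinarith)]
        congr 1
        linear_combination he
    _ ≤ ENNReal.ofReal (2 * p ^ 2) := ENNReal.ofReal_le_ofReal (by nlinarith)

theorem l1Norm_prod_sub_compoundPoisson_le {ι : Type*} (s : Finset ι) {p : ι → ℝ}
    {A : ι → ℝ⟦X⟧} (hA : ∀ i ∈ s, constantCoeff (A i) = 0) (hp : ∀ i ∈ s, p i ∈ Set.Icc 0 1)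
    (hAp : ∀ i ∈ s, l1Norm (A i) ≤ ENNReal.ofReal (p i)) :
    l1Norm (∏ i ∈ s, (C (1 - p i) + A i) - compoundPoisson (∑ i ∈ s, p i) (∑ i ∈ s, A i))
      ≤ ENNReal.ofReal (2 * ∑ i ∈ s, p i ^ 2) := by
  rw [compoundPoisson_sum s p A hA, mul_sum, ENNReal.ofReal_sum_of_nonneg fun i _ => by positivity]
  refine (l1Norm_prod_sub_prod_le s _ _ (fun i hi => ?_) fun i hi =>
    l1Norm_compoundPoisson_le_one (hA i hi) (hp i hi).1 (hAp i hi)).trans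
    (sum_le_sum fun i hi => l1Norm_sub_compoundPoisson_le (hA i hi) (hp i hi).1 (hAp i hi))
  grw [l1Norm_add_le, l1Norm_C, hAp i hi, Real.enorm_eq_ofReal (sub_nonneg.2 (hp i hi).2),
    ← ENNReal.ofReal_add (sub_nonneg.2 (hp i hi).2) (hp i hi).1, sub_add_cancel,
    ENNReal.ofReal_one]

end PowerSeries

namespace ProbabilityTheory

variable {Ω : Type*} [MeasurableSpace Ω] {μ : Measure Ω}

noncomputable def pgf (μ : Measure Ω) (W : Ω → ℕ) : ℝ⟦X⟧ := mk fun k => μ.real {ω | W ω = k}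

@[simp]
lemma coeff_pgf (W : Ω → ℕ) (k : ℕ) : coeff k (pgf μ W) = μ.real {ω | W ω = k} :=
  coeff_mk _ _

@[simp]
lemma constantCoeff_pgf (W : Ω → ℕ) : constantCoeff (pgf μ W) = μ.real {ω | W ω = 0} := by
  rw [← coeff_zero_eq_constantCoeff_apply, coeff_pgf]

lemma enorm_measureReal [IsFiniteMeasure μ] (s : Set Ω) : ‖μ.real s‖ₑ = μ s := by
  rw [Real.enorm_eq_ofReal measureReal_nonneg, ofReal_measureReal]

lemma measurableSet_fiber {W : Ω → ℕ} (hW : Measurable W) (k : ℕ) :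
    MeasurableSet {ω | W ω = k} :=
  hW (measurableSet_singleton k)

lemma tsum_measure_fiber_inter {W : Ω → ℕ} (hW : Measurable W) {s : Set Ω}
    (hs : MeasurableSet s) : ∑' k, μ ({ω | W ω = k} ∩ s) = μ s := by
  rw [← measure_iUnion (fun k l hkl => Disjoint.inter_left _ (Disjoint.inter_right _
    (Set.disjoint_left.2 fun ω hk hl => hkl (hk.symm.trans hl))))
    fun k => (measurableSet_fiber hW k).inter hs, ← Set.iUnion_inter,
    Set.eq_univ_of_forall fun ω => Set.mem_iUnion.2 ⟨W ω, rfl⟩, Set.univ_inter]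

lemma measureReal_fiber_zero [IsProbabilityMeasure μ] {W : Ω → ℕ} (hW : Measurable W) :
    μ.real {ω | W ω = 0} = 1 - μ.real {ω | W ω ≠ 0} := by
  linarith [show μ.real {ω | W ω ≠ 0} = 1 - μ.real {ω | W ω = 0} from
    probReal_compl_eq_one_sub (measurableSet_fiber hW 0)]

lemma constantCoeff_pgf_sub_C [IsProbabilityMeasure μ] {W : Ω → ℕ} (hW : Measurable W) :
    constantCoeff (pgf μ W - C (1 - μ.real {ω | W ω ≠ 0})) = 0 := by
  simp [measureReal_fiber_zero hW]

lemma l1Norm_pgf_sub_C [IsProbabilityMeasure μ] {W : Ω → ℕ} (hW : Measurable W) :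
    l1Norm (pgf μ W - C (1 - μ.real {ω | W ω ≠ 0})) = ENNReal.ofReal (μ.real {ω | W ω ≠ 0}) := by
  rw [ofReal_measureReal, ← measureReal_fiber_zero hW,
    ← tsum_measure_fiber_inter (s := {ω | W ω ≠ 0}) hW (measurableSet_fiber hW 0).compl]
  refine tsum_congr fun k => ?_
  rcases eq_or_ne k 0 with rfl | hk
  · have : {ω | W ω = 0} ∩ {ω | W ω ≠ 0} = ∅ := Set.inter_compl_self _
    simp [this]
  · rw [map_sub, coeff_C, if_neg hk, sub_zero, coeff_pgf, enorm_measureReal]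
    congr 1
    ext ω
    simp only [Set.mem_ofPred_eq, Set.mem_inter_iff]
    grind

lemma pgf_zero [IsProbabilityMeasure μ] : pgf μ (0 : Ω → ℕ) = 1 := by
  ext k
  rcases eq_or_ne k 0 with rfl | hk
  · simp
  · simp [coeff_one, hk, Ne.symm hk]

lemma pgf_add [IsFiniteMeasure μ] {f g : Ω → ℕ} (hf : Measurable f) (hg : Measurable g)
    (hfg : IndepFun f g μ) : pgf μ (f + g) = pgf μ f * pgf μ g := by
  ext k
  have hfiber : {ω | (f + g) ω = k}
      = ⋃ ij ∈ antidiagonal k, {ω | f ω = ij.1} ∩ {ω | g ω = ij.2} := by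
    ext ω
    simp only [Pi.add_apply, Set.mem_ofPred_eq, Set.mem_iUnion, Set.mem_inter_iff,
      HasAntidiagonal.mem_antidiagonal, exists_prop]
    exact ⟨fun h => ⟨(f ω, g ω), h, rfl, rfl⟩, fun ⟨ij, hij, h1, h2⟩ => by rw [h1, h2, hij]⟩
  have hdisj : (antidiagonal k : Set (ℕ × ℕ)).PairwiseDisjoint
      fun ij => {ω | f ω = ij.1} ∩ {ω | g ω = ij.2} := by
    intro ij _ ij' _ hne
    refine Set.disjoint_left.2 fun ω h h' => hne ?_
    exact Prod.ext (h.1.symm.trans h'.1) (h.2.symm.trans h'.2)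
  rw [coeff_pgf, hfiber, measureReal_biUnion_finset hdisj
    fun ij _ => (measurableSet_fiber hf _).inter (measurableSet_fiber hg _), coeff_mul]
  refine sum_congr rfl fun ij _ => ?_
  simp only [coeff_pgf, measureReal_def, ← ENNReal.toReal_mul]
  exact congrArg ENNReal.toReal (hfg.measure_inter_preimage_eq_mul _ _
    (measurableSet_singleton ij.1) (measurableSet_singleton ij.2))

lemma pgf_sum [IsProbabilityMeasure μ] {ι : Type*} {f : ι → Ω → ℕ} (hf : ∀ i, Measurable (f i))
    (hindep : iIndepFun f μ) (s : Finset ι) : pgf μ (∑ i ∈ s, f i) = ∏ i ∈ s, pgf μ (f i) := by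
  classical
  induction s using Finset.cons_induction with
  | empty => simpa using pgf_zero
  | cons a s ha ih =>
    have hsum : Measurable (∑ i ∈ s, f i) := by
      simpa only [← Finset.sum_apply] using Finset.measurable_sum s fun i _ => hf i
    rw [sum_cons, prod_cons, pgf_add (hf a) hsum
      (hindep.indepFun_finsetSum_of_notMem hf ha).symm, ih]

lemma measurable_randomSum {N : Ω → ℕ} {Z : ℕ → Ω → ℕ} (hN : Measurable N)
    (hZ : ∀ j, Measurable (Z j)) : Measurable fun ω => ∑ j ∈ range (N ω), Z j ω :=
  (measurable_from_prod_countable_right (f := fun p : ℕ × Ω => ∑ j ∈ range p.1, Z j p.2)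
    fun m => Finset.measurable_sum (range m) fun j _ => hZ j).comp (hN.prodMk measurable_id)

lemma coeff_pgf_randomSum [IsProbabilityMeasure μ] {N : Ω → ℕ} {Z : ℕ → Ω → ℕ}
    (hN : Measurable N) (hZ : ∀ j, Measurable (Z j))
    (hindep : iIndepFun (fun i : Option ℕ => Option.elim i N Z) μ) (k : ℕ) :
    coeff k (pgf μ fun ω => ∑ j ∈ range (N ω), Z j ω)
      = ∑' m, μ.real {ω | N ω = m} * coeff k (∏ j ∈ range m, pgf μ (Z j)) := by
  have hmeas : ∀ i, Measurable (Option.elim i N Z) := by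
    rintro (_ | j)
    exacts [hN, hZ j]
  have hpartial : ∀ m, ∑ j ∈ range m, Z j = ∑ i ∈ (range m).map .some, Option.elim i N Z :=
    fun m => by rw [sum_map]; rfl
  have hfiber : ∀ m, {ω | N ω = m} ∩ {ω | ∑ j ∈ range (N ω), Z j ω = k}
      = N ⁻¹' {m} ∩ (∑ j ∈ range m, Z j) ⁻¹' {k} := by
    intro m
    ext ω
    simp +contextual [Finset.sum_apply]
  rw [coeff_pgf, measureReal_def,
    ← tsum_measure_fiber_inter (s := {ω | ∑ j ∈ range (N ω), Z j ω = k}) hN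
      (measurable_randomSum hN hZ (measurableSet_singleton k)),
    ENNReal.tsum_toReal_eq fun _ => measure_ne_top _ _]
  refine tsum_congr fun m => ?_
  have hindep_m : IndepFun N (∑ j ∈ range m, Z j) μ := by
    rw [hpartial]
    exact (hindep.indepFun_finsetSum_of_notMem hmeas (i := none) (by simp)).symm
  have hlaw_m : pgf μ (∑ j ∈ range m, Z j) = ∏ j ∈ range m, pgf μ (Z j) := by
    rw [hpartial, pgf_sum hmeas hindep, prod_map]
    rfl
  rw [hfiber, hindep_m.measure_inter_preimage_eq_mul _ _ (measurableSet_singleton m)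
    (measurableSet_singleton k), ENNReal.toReal_mul, ← hlaw_m, coeff_pgf]
  rfl

lemma pgf_randomSum_eq_compoundPoisson [IsProbabilityMeasure μ] {N : Ω → ℕ} {Z : ℕ → Ω → ℕ}
    (hN : Measurable N) (hZ : ∀ j, Measurable (Z j))
    (hindep : iIndepFun (fun i : Option ℕ => Option.elim i N Z) μ) {lam : ℝ}
    (hNpmf : ∀ m : ℕ, μ.real {ω | N ω = m} = Real.exp (-lam) * lam ^ m / m.factorial)
    {Q : ℝ⟦X⟧} (hQ : constantCoeff Q = 0) (hZQ : ∀ j, pgf μ (Z j) = Q) :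
    pgf μ (fun ω => ∑ j ∈ range (N ω), Z j ω) = compoundPoisson lam (C lam * Q) := by
  ext k
  rw [coeff_pgf_randomSum hN hZ hindep, compoundPoisson, coeff_C_mul,
    coeff_subst_eq_tsum (by rw [map_mul, hQ, mul_zero]), ← tsum_mul_left]
  refine tsum_congr fun m => ?_
  simp only [hZQ, prod_const, card_range, hNpmf, coeff_exp, mul_pow, ← map_pow, coeff_C_mul,
    one_div, map_inv₀, map_natCast]
  ring

lemma pgf_eq_of_coeff_eq_on [IsProbabilityMeasure μ] {W : Ω → ℕ} (hW : Measurable W)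
    {Q : ℝ⟦X⟧} (S : Finset ℕ) (hQS : ∑ k ∈ S, coeff k Q = 1) (hQ : ∀ k ∉ S, coeff k Q = 0)
    (hWQ : ∀ k ∈ S, μ.real {ω | W ω = k} = coeff k Q) : pgf μ W = Q := by
  ext k
  by_cases hk : k ∈ S
  · rw [coeff_pgf]
    exact hWQ k hk
  · have hS : μ.real (W ⁻¹' S) = 1 := by
      rw [← sum_measureReal_preimage_singleton S fun k _ => measurableSet_fiber hW k, ← hQS]
      exact sum_congr rfl hWQ
    rw [coeff_pgf, hQ k hk]
    refine measureReal_mono_null (s₂ := (W ⁻¹' S)ᶜ) (fun ω hω hωS => hk (hω ▸ hωS)) ?_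
    rw [probReal_compl_eq_one_sub (hW S.measurableSet), hS, sub_self]

lemma sum_Icc_measureReal_fiber [IsFiniteMeasure μ] {W : Ω → ℕ} (hW : Measurable W) {K : ℕ}
    (hWK : ∀ ω, W ω ≤ K) : ∑ k ∈ Icc 1 K, μ.real {ω | W ω = k} = μ.real {ω | W ω ≠ 0} := by
  change ∑ k ∈ Icc 1 K, μ.real (W ⁻¹' {k}) = _
  rw [sum_measureReal_preimage_singleton _ fun k _ => measurableSet_fiber hW k]
  congr 1
  ext ω
  simp [Nat.one_le_iff_ne_zero, hWK ω]

end ProbabilityTheory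

lemma pgf_eq_C_inv_mul_sum_pgf_sub_C {Ω Ω' ι : Type*} [MeasurableSpace Ω] [MeasurableSpace Ω']
    {μ : Measure Ω} {ν : Measure Ω'} [IsProbabilityMeasure μ] [IsProbabilityMeasure ν]
    [Fintype ι] {X : ι → Ω → ℕ}
    (hX : ∀ i, Measurable (X i)) {K : ℕ} (hXK : ∀ i ω, X i ω ≤ K)
    (hpos : 0 < ∑ i, μ.real {ω | X i ω ≠ 0}) {W : Ω' → ℕ} (hW : Measurable W)
    (hWpmf : ∀ k, 1 ≤ k → k ≤ K → ν.real {ω | W ω = k}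
      = (∑ i, μ.real {ω | X i ω = k}) / ∑ i, μ.real {ω | X i ω ≠ 0}) :
    pgf ν W = C (∑ i, μ.real {ω | X i ω ≠ 0})⁻¹
      * ∑ i, (pgf μ (X i) - C (1 - μ.real {ω | X i ω ≠ 0})) := by
  set A := ∑ i, (pgf μ (X i) - C (1 - μ.real {ω | X i ω ≠ 0}))
  have hcoeff : ∀ k ≠ 0, coeff k A = ∑ i, μ.real {ω | X i ω = k} := fun k hk => by
    simp only [A, map_sum, map_sub, coeff_pgf, coeff_C, if_neg hk, sub_zero]
  have hvanish : ∀ i k, K < k → μ.real {ω | X i ω = k} = 0 := fun i k hk => by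
    have : {ω | X i ω = k} = ∅ :=
      Set.eq_empty_of_forall_notMem fun ω (h : X i ω = k) => by have := hXK i ω; omega
    simp [this]
  refine pgf_eq_of_coeff_eq_on hW (Icc 1 K) ?_ (fun k hk => ?_) (fun k hk => ?_)
  · rw [sum_congr rfl fun k hk => by
      rw [coeff_C_mul, hcoeff k (by have := (mem_Icc.1 hk).1; omega)], ← mul_sum, sum_comm,
      sum_congr rfl fun i _ => sum_Icc_measureReal_fiber (hX i) (hXK i), inv_mul_cancel₀ hpos.ne']
  · rw [coeff_C_mul]
    rcases Nat.eq_zero_or_pos k with rfl | hk0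
    · rw [coeff_zero_eq_constantCoeff_apply, map_sum,
        sum_eq_zero fun i _ => constantCoeff_pgf_sub_C (hX i), mul_zero]
    · rw [hcoeff k hk0.ne', sum_eq_zero fun i _ => hvanish i k (by simp at hk; omega), mul_zero]
  · obtain ⟨hk1, hkK⟩ := mem_Icc.1 hk
    rw [coeff_C_mul, hcoeff k (by omega), ← div_eq_inv_mul]
    exact hWpmf k hk1 hkK

theorem le_cam_poisson_approximation_general
    {Ω Ω' : Type*} [MeasurableSpace Ω] [MeasurableSpace Ω']
    (μ : Measure Ω) (ν : Measure Ω') [IsProbabilityMeasure μ] [IsProbabilityMeasure ν]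
    {n K : ℕ} (X : Fin n → Ω → ℕ)
    (hXmeas : ∀ i, Measurable (X i)) (hXK : ∀ i ω, X i ω ≤ K)
    (hXi : iIndepFun X μ)
    (π : Fin n → ℝ) (hπ : ∀ i, π i = (μ {ω | X i ω ≠ 0}).toReal)
    (V : ℕ → ℝ) (hV : ∀ k, V k = ∑ i, (μ {ω | X i ω = k}).toReal)
    (lam : ℝ) (hlam : lam = ∑ i, π i) (hlampos : 0 < lam)
    (N : Ω' → ℕ) (Z : ℕ → Ω' → ℕ)
    (hN : Measurable N) (hZ : ∀ j, Measurable (Z j))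
    (hNpmf : ∀ m : ℕ, (ν {ω | N ω = m}).toReal = Real.exp (-lam) * lam ^ m / m.factorial)
    (hZpmf : ∀ j, ∀ k, 1 ≤ k → k ≤ K → (ν {ω | Z j ω = k}).toReal = V k / lam)
    (hindep : iIndepFun
      (fun i : Option ℕ => Option.elim i N Z) ν)
    (Y : Ω' → ℕ) (hY : ∀ ω, Y ω = ∑ j ∈ Finset.range (N ω), Z j ω) :
    (∑' k : ℕ, |(μ {ω | ∑ i, X i ω = k}).toReal - (ν {ω | Y ω = k}).toReal|)
      ≤ 2 * ∑ i, (π i) ^ 2 := by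
  obtain rfl : π = fun i => μ.real {ω | X i ω ≠ 0} := funext hπ
  obtain rfl : V = fun k => ∑ i, μ.real {ω | X i ω = k} := funext hV
  subst hlam
  set π : Fin n → ℝ := fun i => μ.real {ω | X i ω ≠ 0}
  set A : Fin n → ℝ⟦X⟧ := fun i => pgf μ (X i) - C (1 - π i)
  have hXlaw : pgf μ (∑ i, X i) = ∏ i, (C (1 - π i) + A i) := by
    simp only [A, add_sub_cancel, pgf_sum hXmeas hXi]
  have hYlaw : pgf ν Y = compoundPoisson (∑ i, π i) (∑ i, A i) := by
    rw [show Y = _ from funext hY, pgf_randomSum_eq_compoundPoisson hN hZ hindep hNpmf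
      (by rw [map_mul, map_sum, sum_eq_zero fun i _ => constantCoeff_pgf_sub_C (hXmeas i),
        mul_zero])
      fun j => pgf_eq_C_inv_mul_sum_pgf_sub_C hXmeas hXK hlampos (hZ j) (hZpmf j),
      ← mul_assoc, ← map_mul, mul_inv_cancel₀ hlampos.ne', map_one, one_mul]
  have hbound := l1Norm_prod_sub_compoundPoisson_le univ (p := π) (A := A)
    (fun i _ => constantCoeff_pgf_sub_C (hXmeas i))
    (fun i _ => ⟨measureReal_nonneg, measureReal_le_one⟩)
    (fun i _ => (l1Norm_pgf_sub_C (hXmeas i)).le)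
  rw [← hXlaw, ← hYlaw] at hbound
  convert tsum_abs_coeff_le (by positivity) hbound using 3 with k
  simp [Finset.sum_apply, measureReal_def]

/-- Le Cam's Poisson approximation theorem: let `X 0, ..., X (n-1)` be independent random
variables taking values in `{0,...,K}`, `X = Σ Xᵢ`, `πᵢ = Pr[Xᵢ ≠ 0]`,
`V k = Σᵢ Pr[Xᵢ = k]`, `λ = Σᵢ πᵢ`. Let `Y = Σ_{j < N} Z j` be the compound Poisson
random variable where `N ~ Poisson(λ)` and the `Z j` are i.i.d. with
`Pr[Z j = k] = V k / λ` for `1 ≤ k ≤ K`, all independent. Then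
`Σ_k |Pr[X = k] − Pr[Y = k]| ≤ 2 Σᵢ πᵢ²`. -/
theorem le_cam_poisson_approximation
    {Ω Ω' : Type*} [MeasurableSpace Ω] [MeasurableSpace Ω']
    (μ : Measure Ω) (ν : Measure Ω') [IsProbabilityMeasure μ] [IsProbabilityMeasure ν]
    {n K : ℕ} (X : Fin n → Ω → ℕ)
    (hXmeas : ∀ i, Measurable (X i)) (hXK : ∀ i ω, X i ω ≤ K)
    (hXi : iIndepFun X μ)
    (π : Fin n → ℝ) (hπ : ∀ i, π i = (μ {ω | X i ω ≠ 0}).toReal)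
    (V : ℕ → ℝ) (hV : ∀ k, V k = ∑ i, (μ {ω | X i ω = k}).toReal)
    (lam : ℝ) (hlam : lam = ∑ i, π i) (hlampos : 0 < lam)
    (N : Ω' → ℕ) (Z : ℕ → Ω' → ℕ)
    (hN : Measurable N) (hZ : ∀ j, Measurable (Z j))
    (hNpmf : ∀ m : ℕ, (ν {ω | N ω = m}).toReal = Real.exp (-lam) * lam ^ m / m.factorial)
    (hZpmf : ∀ j, ∀ k, 1 ≤ k → k ≤ K → (ν {ω | Z j ω = k}).toReal = V k / lam)
    (hZ0 : ∀ j, (ν {ω | Z j ω = 0}).toReal = 0)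
    (hindep : iIndepFun
      (fun i : Option ℕ => Option.elim i N Z) ν)
    (Y : Ω' → ℕ) (hY : ∀ ω, Y ω = ∑ j ∈ Finset.range (N ω), Z j ω) :
    (∑' k : ℕ, |(μ {ω | ∑ i, X i ω = k}).toReal - (ν {ω | Y ω = k}).toReal|)
      ≤ 2 * ∑ i, (π i) ^ 2 :=
  le_cam_poisson_approximation_general μ ν X hXmeas hXK hXi π hπ V hV lam hlam hlampos N Z hN hZ
    hNpmf hZpmf hindep Y hY
end

section
/- Discretization preserves CDFs up to shift: let X_1,...,X_n be independent nonnegative random variables with Σ E[X_i] ≤ 3/ε, and let X̃_i = X_i + δ_i where the δ_i are independent of each other, E[δ_i] = 0 and Var[δ_i] ≤ 2ε⁴ E[X_i], and δ_i is determined by X_i. Then for every β ≥ 0, Pr[ΣX_i ≤ β] ≤ Pr[ΣX̃_i ≤ β + ε] + 6ε. -/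
open MeasureTheory ProbabilityTheory

/-!
On the event `∑ δ i ≤ ε` we have `∑ X̃ i = ∑ X i + ∑ δ i ≤ β + ε` whenever `∑ X i ≤ β`, so only
the event `∑ δ i > ε` can be lost. The perturbations are independent with mean zero, so the
variance of `∑ δ i` is `∑ Var[δ i] ≤ 2ε⁴ ∑ E[X i] ≤ 6ε³`, and Chebyshev bounds the lost event by
`6ε³ / ε² = 6ε`.
-/

section

variable {Ω ι : Type*} [MeasurableSpace Ω] {μ : Measure Ω}

lemma measureReal_sum_le_le_add_measureReal_sum_gt [IsFiniteMeasure μ] (s : Finset ι)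
    (X δ : ι → Ω → ℝ) (β ε : ℝ) :
    μ.real {ω | ∑ i ∈ s, X i ω ≤ β}
      ≤ μ.real {ω | ∑ i ∈ s, (X i ω + δ i ω) ≤ β + ε} + μ.real {ω | ε < ∑ i ∈ s, δ i ω} := by
  have hsub : {ω | ∑ i ∈ s, X i ω ≤ β}
      ⊆ {ω | ∑ i ∈ s, (X i ω + δ i ω) ≤ β + ε} ∪ {ω | ε < ∑ i ∈ s, δ i ω} := by
    intro ω hX
    by_cases hδ : ε < ∑ i ∈ s, δ i ω
    · exact Or.inr hδ
    · left
      simp only [Set.mem_ofPred_eq, Finset.sum_add_distrib] at hX ⊢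
      linarith [not_lt.mp hδ]
  exact (measureReal_mono hsub).trans (measureReal_union_le _ _)

lemma measureReal_le_abs_sum_le_sum_variance_div_sq [IsFiniteMeasure μ] {s : Finset ι}
    {δ : ι → Ω → ℝ} (hL2 : ∀ i ∈ s, MemLp (δ i) 2 μ) (hmean : ∀ i ∈ s, μ[δ i] = 0)
    (hindep : (s : Set ι).Pairwise fun i j => IndepFun (δ i) (δ j) μ) {c : ℝ} (hc : 0 < c) :
    μ.real {ω | c ≤ |∑ i ∈ s, δ i ω|} ≤ (∑ i ∈ s, variance (δ i) μ) / c ^ 2 := by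
  have hmean_sum : ∫ ω, ∑ i ∈ s, δ i ω ∂μ = 0 := by
    rw [integral_finsetSum s fun i hi => (hL2 i hi).integrable one_le_two]
    exact Finset.sum_eq_zero hmean
  have hvar_sum : variance (fun ω => ∑ i ∈ s, δ i ω) μ = ∑ i ∈ s, variance (δ i) μ := by
    simpa only [Finset.sum_fn] using IndepFun.variance_sum hL2 hindep
  have hcheb := meas_ge_le_variance_div_sq
    (by simpa only [Finset.sum_fn] using memLp_finsetSum s hL2) hc
  rw [hmean_sum, hvar_sum] at hcheb
  simp only [sub_zero] at hcheb
  rw [measureReal_def]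
  exact ENNReal.toReal_le_of_le_ofReal
    (div_nonneg (Finset.sum_nonneg fun i _ => variance_nonneg _ _) (sq_nonneg c)) hcheb

end

theorem discretization_cdf_shift_general
    {Ω : Type*} [MeasurableSpace Ω] (μ : Measure Ω) [IsProbabilityMeasure μ]
    {n : ℕ} (X δ : Fin n → Ω → ℝ) (ε : ℝ) (hε : 0 < ε)
    (hδL2 : ∀ i, MemLp (δ i) 2 μ)
    (hδmean : ∀ i, μ[δ i] = 0)
    (hδvar : ∀ i, variance (δ i) μ ≤ 2 * ε ^ 4 * μ[X i])
    (hindep : iIndepFun (fun i ω => (X i ω, δ i ω)) μ)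
    (hEsum : ∑ i, μ[X i] ≤ 3 / ε) :
    ∀ β : ℝ, 0 ≤ β →
      (μ {ω | ∑ i, X i ω ≤ β}).toReal
        ≤ (μ {ω | ∑ i, (X i ω + δ i ω) ≤ β + ε}).toReal + 6 * ε := by
  intro β _
  have hδindep : iIndepFun δ μ := hindep.comp (fun _ => Prod.snd) fun _ => measurable_snd
  have hvar : ∑ i, variance (δ i) μ ≤ 6 * ε ^ 3 :=
    calc ∑ i, variance (δ i) μ ≤ 2 * ε ^ 4 * ∑ i, μ[X i] := by
          rw [Finset.mul_sum]; exact Finset.sum_le_sum fun i _ => hδvar i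
      _ ≤ 2 * ε ^ 4 * (3 / ε) := by gcongr
      _ = 6 * ε ^ 3 := by field_simp; ring
  have hlost : μ.real {ω | ε < ∑ i, δ i ω} ≤ 6 * ε :=
    calc μ.real {ω | ε < ∑ i, δ i ω} ≤ μ.real {ω | ε ≤ |∑ i, δ i ω|} :=
          measureReal_mono <| Set.ofPred_subset_ofPred.mpr fun ω hω => hω.le.trans (le_abs_self _)
      _ ≤ (∑ i, variance (δ i) μ) / ε ^ 2 :=
          measureReal_le_abs_sum_le_sum_variance_div_sq (fun i _ => hδL2 i) (fun i _ => hδmean i)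
            (fun i _ j _ hij => hδindep.indepFun hij) hε
      _ ≤ 6 * ε ^ 3 / ε ^ 2 := by gcongr
      _ = 6 * ε := by field_simp
  have hsplit := measureReal_sum_le_le_add_measureReal_sum_gt (μ := μ) Finset.univ X δ β ε
  simp only [measureReal_def] at hsplit hlost
  linarith

/-- Discretization preserves CDFs up to shift: let `X i` be independent nonnegative random
variables with `Σ E[X i] ≤ 3/ε`, and `X̃ i = X i + δ i` where `δ i` is determined by `X i`,
has mean `0` and variance at most `2ε⁴ E[X i]`, with the pairs `(X i, δ i)` mutually
independent across `i`. Then `Pr[Σ X i ≤ β] ≤ Pr[Σ X̃ i ≤ β + ε] + 6ε` for all `β ≥ 0`. -/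
theorem discretization_cdf_shift
    {Ω : Type*} [MeasurableSpace Ω] (μ : Measure Ω) [IsProbabilityMeasure μ]
    {n : ℕ} (X δ : Fin n → Ω → ℝ) (ε : ℝ) (hε : 0 < ε) (hε2 : ε < 1/2)
    (hXmeas : ∀ i, Measurable (X i)) (hXint : ∀ i, Integrable (X i) μ)
    (hXnn : ∀ i ω, 0 ≤ X i ω)
    (g : Fin n → ℝ → ℝ) (hg : ∀ i, Measurable (g i))
    (hdet : ∀ i ω, δ i ω = g i (X i ω))
    (hδL2 : ∀ i, MemLp (δ i) 2 μ)
    (hδmean : ∀ i, μ[δ i] = 0)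
    (hδvar : ∀ i, variance (δ i) μ ≤ 2 * ε ^ 4 * μ[X i])
    (hindep : iIndepFun (fun i ω => (X i ω, δ i ω)) μ)
    (hEsum : ∑ i, μ[X i] ≤ 3 / ε) :
    ∀ β : ℝ, 0 ≤ β →
      (μ {ω | ∑ i, X i ω ≤ β}).toReal
        ≤ (μ {ω | ∑ i, (X i ω + δ i ω) ≤ β + ε}).toReal + 6 * ε :=
  discretization_cdf_shift_general μ X δ ε hε hδL2 hδmean hδvar hindep hEsum
end

section
/- Let μ:[0,C]→[0,1] be α-Lipschitz, and let X and X̃ be nonnegative random variables with CDFs P and P̃ such that P(x) ≤ P̃(x+ε)+cε and P̃(x) ≤ P(x+ε)+cε for all x ∈ [0,C], and both are supported on [0,C]. Then |E[μ(X)] − E[μ(X̃)]| ≤ α(2c·C·ε + 2ε) + 2ε·sup|μ|. -/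
/-!
Extend `u` to a Lipschitz function `v` on `ℝ`. The fundamental theorem of calculus for `v`
and Fubini give `E v(X) = v b - ∫ₐᵇ v' P`, with `P` the CDF of `X`, so the two expectations
differ by `∫ₐᵇ v' (P̃ - P)`, which is at most `α ∫ₐᵇ |P - P̃|` because `|v'| ≤ α`. The shift
hypothesis bounds `|P - P̃|` by the increments `P(· + ε) - P` and `P̃(· + ε) - P̃` plus `cε`,
and the integral over `[a, b]` of such an increment of a monotone function telescopes to at
most `ε` times its total rise.
-/

open MeasureTheory ProbabilityTheory Set
open scoped NNReal

theorem Monotone.integral_comp_add_right_sub_le {F : ℝ → ℝ} (hF : Monotone F) (a b : ℝ)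
    {ε : ℝ} (hε : 0 ≤ ε) :
    ∫ t in a..b, (F (t + ε) - F t) ≤ ε * (F (b + ε) - F a) := by
  have hint : ∀ x y : ℝ, IntervalIntegrable F volume x y := fun _ _ => hF.intervalIntegrable
  have hupper : ∫ t in b..b + ε, F t ≤ ε * F (b + ε) := by
    simpa using intervalIntegral.integral_mono_on (a := b) (b := b + ε) (by linarith) (hint _ _)
      intervalIntegrable_const fun t ht => hF ht.2
  have hlower : ε * F a ≤ ∫ t in a..a + ε, F t := by
    simpa using intervalIntegral.integral_mono_on (a := a) (b := a + ε) (by linarith)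
      intervalIntegrable_const (hint _ _) fun t ht => hF ht.1
  rw [intervalIntegral.integral_sub (f := fun t => F (t + ε))
      (hF.comp (monotone_id.add_const ε)).intervalIntegrable (hint _ _),
    intervalIntegral.integral_comp_add_right F ε,
    intervalIntegral.integral_interval_sub_interval_comm (hint _ _) (hint _ _) (hint _ _),
    intervalIntegral.integral_symm a, intervalIntegral.integral_symm b]
  linarith

theorem integral_abs_sub_le_of_shift {F G : ℝ → ℝ} (hF : Monotone F) (hG : Monotone G)
    {a b ε δ : ℝ} (hab : a ≤ b) (hε : 0 ≤ ε)
    (hFG : ∀ t ∈ Icc a b, F t ≤ G (t + ε) + δ) (hGF : ∀ t ∈ Icc a b, G t ≤ F (t + ε) + δ) :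
    ∫ t in a..b, |F t - G t|
      ≤ ε * (F (b + ε) - F a) + ε * (G (b + ε) - G a) + (b - a) * δ := by
  have hshift {H : ℝ → ℝ} (hH : Monotone H) :
      IntervalIntegrable (fun t => H (t + ε) - H t) volume a b :=
    (hH.comp (monotone_id.add_const ε)).intervalIntegrable.sub hH.intervalIntegrable
  have hpointwise :
      ∀ t ∈ Icc a b, |F t - G t| ≤ (F (t + ε) - F t) + (G (t + ε) - G t) + δ := by
    intro t ht
    have := hF (le_add_of_nonneg_right hε : t ≤ t + ε)
    have := hG (le_add_of_nonneg_right hε : t ≤ t + ε)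
    have := hFG t ht
    have := hGF t ht
    rw [abs_le]; constructor <;> linarith
  calc ∫ t in a..b, |F t - G t|
      ≤ ∫ t in a..b, ((F (t + ε) - F t) + (G (t + ε) - G t) + δ) :=
        intervalIntegral.integral_mono_on hab (hF.intervalIntegrable.sub hG.intervalIntegrable).abs
          (((hshift hF).add (hshift hG)).add intervalIntegrable_const) hpointwise
    _ = (∫ t in a..b, (F (t + ε) - F t)) + (∫ t in a..b, (G (t + ε) - G t)) + (b - a) * δ := by
        rw [intervalIntegral.integral_add ((hshift hF).add (hshift hG)) intervalIntegrable_const,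
          intervalIntegral.integral_add (hshift hF) (hshift hG), intervalIntegral.integral_const,
          smul_eq_mul]
    _ ≤ _ := by
        gcongr
        · exact hF.integral_comp_add_right_sub_le a b hε
        · exact hG.integral_comp_add_right_sub_le a b hε

theorem cdf_map_eq_measureReal {Ω : Type*} [MeasurableSpace Ω] {μ : Measure Ω}
    [IsProbabilityMeasure μ] {X : Ω → ℝ} (hX : Measurable X) (t : ℝ) :
    cdf (μ.map X) t = μ.real {ω | X ω ≤ t} := by
  have := Measure.isProbabilityMeasure_map (μ := μ) hX.aemeasurable
  rw [cdf_eq_real, map_measureReal_apply hX measurableSet_Iic]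
  rfl

theorem LipschitzWith.eq_sub_setIntegral_indicator_deriv {K : ℝ≥0} {v : ℝ → ℝ}
    (hv : LipschitzWith K v) {a b x : ℝ} (hx : x ∈ Icc a b) :
    v x = v b - ∫ t in Icc a b, (Ici x).indicator (deriv v) t := by
  have hinter : Icc a b ∩ Ici x = Icc x b := by
    ext t
    simp only [mem_inter_iff, mem_Icc, mem_Ici]
    constructor
    · rintro ⟨⟨-, htb⟩, hxt⟩
      exact ⟨hxt, htb⟩
    · rintro ⟨hxt, htb⟩
      exact ⟨⟨hx.1.trans hxt, htb⟩, hxt⟩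
  rw [setIntegral_indicator measurableSet_Ici, hinter, integral_Icc_eq_integral_Ioc,
    ← intervalIntegral.integral_of_le hx.2,
    hv.lipschitzOnWith.absolutelyContinuousOnInterval.integral_deriv_eq_sub]
  ring

theorem LipschitzWith.integral_comp_eq_sub_integral_deriv_mul_cdf {Ω : Type*}
    [MeasurableSpace Ω] {μ : Measure Ω} [IsProbabilityMeasure μ] {K : ℝ≥0} {v : ℝ → ℝ}
    (hv : LipschitzWith K v) {X : Ω → ℝ} (hX : Measurable X) {a b : ℝ} (hab : a ≤ b)
    (hXab : ∀ ω, X ω ∈ Icc a b) :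
    μ[fun ω => v (X ω)] = v b - ∫ t in a..b, deriv v t * cdf (μ.map X) t := by
  set f : Ω → ℝ → ℝ := fun ω t => (Ici (X ω)).indicator (deriv v) t
  have hf : Integrable (Function.uncurry f) (μ.prod (volume.restrict (Icc a b))) := by
    refine Integrable.of_bound ?_ K (ae_of_all _ fun p => ?_)
    · exact ((measurable_deriv v).comp measurable_snd).indicator
        (measurableSet_le (hX.comp measurable_fst) measurable_snd) |>.aestronglyMeasurable
    · exact (norm_indicator_le_norm_self _ _).trans (norm_deriv_le_of_lipschitz hv)
  have hinner (t : ℝ) : ∫ ω, f ω t ∂μ = deriv v t * cdf (μ.map X) t := by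
    rw [cdf_map_eq_measureReal hX, mul_comm, ← smul_eq_mul,
      ← integral_indicator_const _ (measurableSet_le hX measurable_const)]
    rfl
  calc μ[fun ω => v (X ω)] = ∫ ω, (v b - ∫ t in Icc a b, f ω t) ∂μ :=
        integral_congr_ae (ae_of_all _ fun ω => hv.eq_sub_setIntegral_indicator_deriv (hXab ω))
    _ = v b - ∫ t in Icc a b, ∫ ω, f ω t ∂μ := by
        have hf_left : Integrable (fun ω => ∫ t in Icc a b, f ω t) μ := hf.integral_prod_left
        rw [integral_sub (integrable_const _) hf_left, integral_const,
          probReal_univ, one_smul, integral_integral_swap hf]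
    _ = v b - ∫ t in a..b, deriv v t * cdf (μ.map X) t := by
        simp only [hinner, intervalIntegral.integral_of_le hab, integral_Icc_eq_integral_Ioc]

theorem LipschitzOnWith.abs_integral_comp_sub_le {Ω : Type*} [MeasurableSpace Ω]
    {μ : Measure Ω} [IsProbabilityMeasure μ] {K : ℝ≥0} {u : ℝ → ℝ} {a b : ℝ}
    (hu : LipschitzOnWith K u (Icc a b)) (hab : a ≤ b) {X X' : Ω → ℝ} (hX : Measurable X)
    (hX' : Measurable X') (hXab : ∀ ω, X ω ∈ Icc a b) (hX'ab : ∀ ω, X' ω ∈ Icc a b) :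
    |μ[fun ω => u (X ω)] - μ[fun ω => u (X' ω)]|
      ≤ K * ∫ t in a..b, |cdf (μ.map X) t - cdf (μ.map X') t| := by
  obtain ⟨v, hv, huv⟩ := hu.extend_real
  have hcomp {Y : Ω → ℝ} (hY : ∀ ω, Y ω ∈ Icc a b) : (fun ω => u (Y ω)) = fun ω => v (Y ω) :=
    funext fun ω => huv (hY ω)
  have hcdf (Y : Ω → ℝ) : IntervalIntegrable (cdf (μ.map Y)) volume a b :=
    (monotone_cdf _).intervalIntegrable
  have hint (Y : Ω → ℝ) :
      IntervalIntegrable (fun t => deriv v t * cdf (μ.map Y) t) volume a b := by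
    rw [intervalIntegrable_iff]
    exact (hcdf Y).def'.bdd_mul (measurable_deriv v).aestronglyMeasurable
      (ae_of_all _ fun _ => norm_deriv_le_of_lipschitz hv)
  rw [hcomp hXab, hcomp hX'ab, hv.integral_comp_eq_sub_integral_deriv_mul_cdf hX hab hXab,
    hv.integral_comp_eq_sub_integral_deriv_mul_cdf hX' hab hX'ab, sub_sub_sub_cancel_left,
    ← intervalIntegral.integral_sub (hint X') (hint X), ← intervalIntegral.integral_const_mul]
  refine (Real.norm_eq_abs _).symm.trans_le <| intervalIntegral.norm_integral_le_of_norm_le hab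
    (ae_of_all _ fun t _ => ?_) (((hcdf X).sub (hcdf X')).abs.const_mul K)
  rw [← mul_sub, norm_mul, Real.norm_eq_abs (_ - _), abs_sub_comm]
  exact mul_le_mul_of_nonneg_right (norm_deriv_le_of_lipschitz hv) (abs_nonneg _)

theorem expected_utility_close_of_cdf_shift_general
    (C α ε c : ℝ) (hC : 0 < C) (hα : 0 < α) (hε : 0 < ε) (hc : 0 < c)
    (u : ℝ → ℝ) (hu : LipschitzOnWith (Real.toNNReal α) u (Set.Icc 0 C))
    {Ω : Type*} [MeasurableSpace Ω] (μ : Measure Ω) [IsProbabilityMeasure μ]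
    (X X' : Ω → ℝ) (hX : Measurable X) (hX' : Measurable X')
    (hXs : ∀ ω, X ω ∈ Set.Icc 0 C) (hX's : ∀ ω, X' ω ∈ Set.Icc 0 C)
    (hshift1 : ∀ x ∈ Set.Icc (0:ℝ) C,
      (μ {ω | X ω ≤ x}).toReal ≤ (μ {ω | X' ω ≤ x + ε}).toReal + c * ε)
    (hshift2 : ∀ x ∈ Set.Icc (0:ℝ) C,
      (μ {ω | X' ω ≤ x}).toReal ≤ (μ {ω | X ω ≤ x + ε}).toReal + c * ε) :
    |μ[fun ω => u (X ω)] - μ[fun ω => u (X' ω)]|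
      ≤ α * (2 * c * C * ε + 2 * ε)
        + 2 * ε * sSup ((fun x => |u x|) '' Set.Icc (0:ℝ) C) := by
  have hcdf_rise (Y : Ω → ℝ) : cdf (μ.map Y) (C + ε) - cdf (μ.map Y) 0 ≤ 1 := by
    linarith [cdf_le_one (μ.map Y) (C + ε), cdf_nonneg (μ.map Y) 0]
  have hXX' : ∀ t ∈ Icc 0 C, cdf (μ.map X) t ≤ cdf (μ.map X') (t + ε) + c * ε := by
    simp only [cdf_map_eq_measureReal hX, cdf_map_eq_measureReal hX']
    exact hshift1
  have hX'X : ∀ t ∈ Icc 0 C, cdf (μ.map X') t ≤ cdf (μ.map X) (t + ε) + c * ε := by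
    simp only [cdf_map_eq_measureReal hX, cdf_map_eq_measureReal hX']
    exact hshift2
  have hsup : 0 ≤ sSup ((fun x => |u x|) '' Set.Icc (0:ℝ) C) :=
    Real.sSup_nonneg (by rintro _ ⟨x, -, rfl⟩; exact abs_nonneg _)
  calc |μ[fun ω => u (X ω)] - μ[fun ω => u (X' ω)]|
      ≤ α * ∫ t in (0)..C, |cdf (μ.map X) t - cdf (μ.map X') t| := by
        simpa only [Real.coe_toNNReal _ hα.le] using hu.abs_integral_comp_sub_le hC.le hX hX' hXs hX's
    _ ≤ α * (ε * (cdf (μ.map X) (C + ε) - cdf (μ.map X) 0)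
          + ε * (cdf (μ.map X') (C + ε) - cdf (μ.map X') 0) + (C - 0) * (c * ε)) := by
        gcongr
        exact integral_abs_sub_le_of_shift (monotone_cdf _) (monotone_cdf _) hC.le hε.le hXX' hX'X
    _ ≤ α * (ε * 1 + ε * 1 + (C - 0) * (c * ε)) := by gcongr <;> exact hcdf_rise _
    _ ≤ α * (2 * c * C * ε + 2 * ε) + 2 * ε * sSup ((fun x => |u x|) '' Set.Icc (0:ℝ) C) := by
        linarith [mul_nonneg hα.le (by positivity : 0 ≤ c * C * ε), mul_nonneg hε.le hsup]

/-- If the CDFs of `X` and `X'` (both supported on `[0,C]`) agree up to an `ε`-shift and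
an additive error `c·ε`, and `u : [0,C] → [0,1]` is `α`-Lipschitz, then the expected
utilities differ by at most `α(2cCε + 2ε) + 2ε·sup|u|`. -/
theorem expected_utility_close_of_cdf_shift
    (C α ε c : ℝ) (hC : 0 < C) (hα : 0 < α) (hε : 0 < ε) (hc : 0 < c)
    (u : ℝ → ℝ) (hu : LipschitzOnWith (Real.toNNReal α) u (Set.Icc 0 C))
    (hu01 : ∀ x ∈ Set.Icc (0:ℝ) C, u x ∈ Set.Icc (0:ℝ) 1)
    {Ω : Type*} [MeasurableSpace Ω] (μ : Measure Ω) [IsProbabilityMeasure μ]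
    (X X' : Ω → ℝ) (hX : Measurable X) (hX' : Measurable X')
    (hXs : ∀ ω, X ω ∈ Set.Icc 0 C) (hX's : ∀ ω, X' ω ∈ Set.Icc 0 C)
    (hshift1 : ∀ x ∈ Set.Icc (0:ℝ) C,
      (μ {ω | X ω ≤ x}).toReal ≤ (μ {ω | X' ω ≤ x + ε}).toReal + c * ε)
    (hshift2 : ∀ x ∈ Set.Icc (0:ℝ) C,
      (μ {ω | X' ω ≤ x}).toReal ≤ (μ {ω | X ω ≤ x + ε}).toReal + c * ε) :
    |μ[fun ω => u (X ω)] - μ[fun ω => u (X' ω)]|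
      ≤ α * (2 * c * C * ε + 2 * ε)
        + 2 * ε * sSup ((fun x => |u x|) '' Set.Icc (0:ℝ) C) :=
  expected_utility_close_of_cdf_shift_general C α ε c hC hα hε hc u hu μ X X' hX hX' hXs hX's
    hshift1 hshift2
end
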